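/- (Lemma 4.2) Let the sequences {x_k^t}, {x_0^t}, {y^t} be generated by the flexible ADMM (Algorithm 4) for the sharing problem, with an arbitrary choice of index sets C^{t+1}, and suppose Assumptions C1 and C2 hold. Then for every t ≥ 1: L({x_k^{t+1}}, x_0^{t+1}; y^{t+1}) − L({x_k^t}, x_0^t; y^t) ≤ Σ_{k ∈ C^{t+1}, k ≠ 0} (−γ_k(ρ)/2) ‖x_k^{t+1} − x_k^t‖² − (γ(ρ)/2 − L²/ρ) ‖x_0^{t+1} − x_0^t‖². -/
import Mathlib


open Filter
open scoped RealInnerProductSpace BigOperators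

section Aux
variable {E : Type*} [NormedAddCommGroup E] [NormedSpace ℝ E]

lemma strongConvexOn_add_affine {s : Set E} {m : ℝ} {f : E → ℝ}
    (hf : StrongConvexOn s m f) (φ : E →L[ℝ] ℝ) (d : ℝ) :
    StrongConvexOn s m (fun z => f z + φ z + d) := by
  refine ⟨hf.1, fun x hx y hy a b ha hb hab => ?_⟩
  have h := hf.2 hx hy ha hb hab
  have hd : a * d + b * d = d := by rw [← add_mul, hab, one_mul]
  simp only [smul_eq_mul] at h ⊢
  rw [map_add, map_smul, map_smul]
  simp only [smul_eq_mul]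
  linarith

lemma strongConvexOn_min {s : Set E} {m : ℝ} {f : E → ℝ}
    (hf : StrongConvexOn s m f) {p : E} (hp : p ∈ s)
    (hmin : ∀ z ∈ s, f p ≤ f z) {z : E} (hz : z ∈ s) :
    f p + m / 2 * ‖z - p‖ ^ 2 ≤ f z := by
  set φ := m / 2 * ‖z - p‖ ^ 2 with hφdef
  by_contra hcon
  push_neg at hcon
  set ε := f p + φ - f z with hε
  have hεpos : 0 < ε := by linarith
  have hφ1 : (0:ℝ) < |φ| + 1 := by positivity
  set a := min 1 (ε / (|φ| + 1)) with hadef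
  have ha0 : 0 < a := lt_min one_pos (div_pos hεpos hφ1)
  have ha1 : a ≤ 1 := min_le_left _ _
  have hb0 : (0:ℝ) ≤ 1 - a := by linarith
  have h := hf.2 hz hp ha0.le hb0 (by ring)
  simp only [smul_eq_mul] at h
  rw [← hφdef] at h
  have hmem : a • z + (1 - a) • p ∈ s := hf.1 hz hp ha0.le hb0 (by ring)
  have h2 := hmin _ hmem
  have haφ : a * φ < ε := by
    have h3 : a ≤ ε / (|φ| + 1) := min_le_right _ _
    have h4 : a * (|φ| + 1) ≤ ε := (le_div_iff₀ hφ1).mp h3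
    have h5 : φ ≤ |φ| := le_abs_self φ
    nlinarith
  have i1 : a * (f p - f z + (1 - a) * φ) ≤ 0 := by nlinarith [h, h2]
  have hX : f p - f z + (1 - a) * φ ≤ 0 := by nlinarith [i1, ha0]
  linarith [hX, haφ, hcon, hε, hφdef]

lemma fin_sum_split {β : Type*} [AddCommMonoid β] {K : ℕ} (k : Fin K) (f : Fin K → β) :
    ∑ j, f j = (∑ j ∈ Finset.univ.filter (fun j => j < k), f j) + f k
      + (∑ j ∈ Finset.univ.filter (fun j => k < j), f j) := by
  have hset : Finset.univ.filter (fun j => ¬ j < k)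
      = insert k (Finset.univ.filter (fun j => k < j)) := by
    ext j
    simp only [Finset.mem_filter, Finset.mem_univ, true_and, Finset.mem_insert, not_lt]
    constructor
    · intro h
      rcases eq_or_lt_of_le h with h | h
      · exact Or.inl h.symm
      · exact Or.inr h
    · rintro (rfl | h)
      · exact le_refl _
      · exact h.le
  have h1 : (∑ j ∈ Finset.univ.filter (fun j => ¬ j < k), f j)
      = f k + ∑ j ∈ Finset.univ.filter (fun j => k < j), f j := by
    rw [hset, Finset.sum_insert (by simp)]
  rw [← Finset.sum_filter_add_sum_filter_not Finset.univ (fun j => j < k) f, h1, ← add_assoc]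
end Aux

section Grad
variable {E : Type*} [NormedAddCommGroup E] [InnerProductSpace ℝ E] [CompleteSpace E]

lemma grad_zero_of_min (l : E → ℝ) (l' : E → E) (hgrad : ∀ z, HasGradientAt l (l' z) z)
    (yv S : E) (ρ : ℝ) (p : E)
    (hmin : ∀ z, l p + ⟪yv, p⟫ + ρ / 2 * ‖p - S‖ ^ 2 ≤ l z + ⟪yv, z⟫ + ρ / 2 * ‖z - S‖ ^ 2) :
    l' p + yv + ρ • (p - S) = 0 := by
  have hfun : ∀ z : E, l z + ⟪yv, z⟫ + ρ / 2 * ⟪z - S, z - S⟫ =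
      l z + ⟪yv, z⟫ + ρ / 2 * ‖z - S‖ ^ 2 := by
    intro z; rw [real_inner_self_eq_norm_sq]
  have hmin' : IsLocalMin (fun z : E => l z + ⟪yv, z⟫ + ρ / 2 * ⟪z - S, z - S⟫) p := by
    apply Filter.Eventually.of_forall
    intro z
    simp only [hfun]
    exact hmin z
  have h1 : HasFDerivAt l (InnerProductSpace.toDual ℝ E (l' p)) p := (hgrad p).hasFDerivAt
  have h2 : HasFDerivAt (fun z : E => ⟪yv, z⟫) (innerSL ℝ yv) p := (innerSL ℝ yv).hasFDerivAt
  have hid : HasFDerivAt (fun z : E => z - S) (ContinuousLinearMap.id ℝ E) p :=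
    (hasFDerivAt_id p).sub_const S
  have h3 := (hid.inner ℝ hid).const_mul (ρ / 2)
  have hD := (h1.add h2).add h3
  have hzero := hmin'.hasFDerivAt_eq_zero hD
  set v := l' p + yv + ρ • (p - S) with hv
  have hev := DFunLike.congr_fun hzero v
  simp only [ContinuousLinearMap.add_apply, ContinuousLinearMap.coe_smul', Pi.smul_apply,
    ContinuousLinearMap.comp_apply, ContinuousLinearMap.prod_apply,
    ContinuousLinearMap.id_apply, fderivInnerCLM_apply, InnerProductSpace.toDual_apply_apply,
    innerSL_apply_apply, ContinuousLinearMap.zero_apply, smul_eq_mul] at hev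
  have hvv : ⟪v, v⟫ = 0 := by
    rw [hv]
    simp only [inner_add_left, real_inner_smul_left]
    rw [real_inner_comm (p - S) v] at hev
    linarith [hev]
  exact inner_self_eq_zero.mp hvv ▸ rfl
end Grad

/-- Augmented Lagrangian for the reformulated sharing problem:
`L({x_k}, x_0; y) = Σ_k g_k(x_k) + ℓ(x_0) + ⟨x_0 − Σ_k A_k x_k, y⟩
  + (ρ/2)‖x_0 − Σ_k A_k x_k‖²`. -/
noncomputable def augLs {M K : ℕ} {Nv : Fin K → ℕ}
    (g : ∀ k : Fin K, EuclideanSpace ℝ (Fin (Nv k)) → ℝ)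
    (l : EuclideanSpace ℝ (Fin M) → ℝ) (ρ : ℝ)
    (A : ∀ k : Fin K, EuclideanSpace ℝ (Fin (Nv k)) →L[ℝ] EuclideanSpace ℝ (Fin M))
    (xk : ∀ k : Fin K, EuclideanSpace ℝ (Fin (Nv k)))
    (x0 y : EuclideanSpace ℝ (Fin M)) : ℝ :=
  (∑ k, g k (xk k)) + l x0 + ⟪x0 - ∑ k, A k (xk k), y⟫
    + ρ / 2 * ‖x0 - ∑ k, A k (xk k)‖ ^ 2

/-- **Lemma 4.2.**  For the flexible ADMM (Algorithm 4) on the sharing problem, under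
Assumptions C1 and C2, for every `t ≥ 1`:
`L^{t+1} − L^t ≤ Σ_{k∈C^{t+1}, k≠0}(−γ_k(ρ)/2)‖x_k^{t+1} − x_k^t‖²
  − (γ(ρ)/2 − L²/ρ)‖x_0^{t+1} − x_0^t‖²`. -/
theorem lemma4_2
    {M K : ℕ} {Nv : Fin K → ℕ} (hK : 1 ≤ K)
    (g : ∀ k : Fin K, EuclideanSpace ℝ (Fin (Nv k)) → ℝ)
    (l : EuclideanSpace ℝ (Fin M) → ℝ)
    (l' : EuclideanSpace ℝ (Fin M) → EuclideanSpace ℝ (Fin M))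
    (A : ∀ k : Fin K, EuclideanSpace ℝ (Fin (Nv k)) →L[ℝ] EuclideanSpace ℝ (Fin M))
    (X : ∀ k : Fin K, Set (EuclideanSpace ℝ (Fin (Nv k))))
    (Lc ρ : ℝ)
    (x : ℕ → ∀ k : Fin K, EuclideanSpace ℝ (Fin (Nv k)))
    (x0 y : ℕ → EuclideanSpace ℝ (Fin M))
    (C : ℕ → Finset (Option (Fin K)))
    -- Assumption C1
    (hgrad : ∀ z, HasGradientAt l (l' z) z)
    (hLpos : 0 < Lc)
    (hLip : ∀ u v, ‖l' u - l' v‖ ≤ Lc * ‖u - v‖)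
    (hXne : ∀ k, (X k).Nonempty) (hXcl : ∀ k, IsClosed (X k))
    (hXcv : ∀ k, Convex ℝ (X k))
    (hA : ∀ k, Function.Injective (A k))
    (hρ : 0 < ρ)
    -- Algorithm 4
    (hC1 : C 1 = Finset.univ)
    (hxupd : ∀ (t : ℕ) (k : Fin K),
      (some k ∈ C (t + 1) → x (t + 1) k ∈ X k ∧ ∀ z ∈ X k,
        g k (x (t + 1) k) - ⟪y t, A k (x (t + 1) k)⟫
            + ρ / 2 * ‖x0 t - (∑ j ∈ Finset.univ.filter (fun j => j < k), A j (x (t + 1) j))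
                - (∑ j ∈ Finset.univ.filter (fun j => k < j), A j (x t j))
                - A k (x (t + 1) k)‖ ^ 2
          ≤ g k z - ⟪y t, A k z⟫
            + ρ / 2 * ‖x0 t - (∑ j ∈ Finset.univ.filter (fun j => j < k), A j (x (t + 1) j))
                - (∑ j ∈ Finset.univ.filter (fun j => k < j), A j (x t j))
                - A k z‖ ^ 2) ∧
      (some k ∉ C (t + 1) → x (t + 1) k = x t k))
    (hx0upd : ∀ t : ℕ,
      (none ∈ C (t + 1) → ∀ z : EuclideanSpace ℝ (Fin M),
        l (x0 (t + 1)) + ⟪y t, x0 (t + 1)⟫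
            + ρ / 2 * ‖x0 (t + 1) - ∑ k, A k (x (t + 1) k)‖ ^ 2
          ≤ l z + ⟪y t, z⟫ + ρ / 2 * ‖z - ∑ k, A k (x (t + 1) k)‖ ^ 2) ∧
      (none ∉ C (t + 1) → x0 (t + 1) = x0 t))
    (hyupd : ∀ t : ℕ,
      (none ∈ C (t + 1) →
        y (t + 1) = y t + ρ • (x0 (t + 1) - ∑ k, A k (x (t + 1) k))) ∧
      (none ∉ C (t + 1) → y (t + 1) = y t))
    -- Assumption C2
    (γk : Fin K → ℝ) (γρ : ℝ)
    (hγkpos : ∀ k, 0 < γk k) (hγρpos : 0 < γρ)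
    (hstrongk : ∀ k, StrongConvexOn (X k) (γk k)
      (fun z : EuclideanSpace ℝ (Fin (Nv k)) => g k z + ρ / 2 * ‖A k z‖ ^ 2))
    (hstrong0 : StrongConvexOn Set.univ γρ
      (fun z : EuclideanSpace ℝ (Fin M) => l z + ρ / 2 * ‖z‖ ^ 2))
    (hC2b : 2 * Lc ^ 2 < ρ * γρ) (hC2c : Lc ≤ ρ) :
    ∀ t : ℕ, 1 ≤ t →
      augLs g l ρ A (x (t + 1)) (x0 (t + 1)) (y (t + 1))
          - augLs g l ρ A (x t) (x0 t) (y t)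
        ≤ (∑ k ∈ Finset.univ.filter (fun k : Fin K => some k ∈ C (t + 1)),
            -(γk k / 2) * ‖x (t + 1) k - x t k‖ ^ 2)
          - (γρ / 2 - Lc ^ 2 / ρ) * ‖x0 (t + 1) - x0 t‖ ^ 2 := by
  intro t ht
  -- membership of iterates in the constraint sets
  have hmemX : ∀ s : ℕ, 1 ≤ s → ∀ k, x s k ∈ X k := by
    intro s hs
    induction s, hs using Nat.le_induction with
    | base =>
      intro k
      exact ((hxupd 0 k).1 (by rw [hC1]; exact Finset.mem_univ _)).1
    | succ n hn ih =>
      intro k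
      by_cases hk : some k ∈ C (n + 1)
      · exact ((hxupd n k).1 hk).1
      · rw [(hxupd n k).2 hk]; exact ih k
  -- dual invariant: y s = - l' (x0 s) for s ≥ 1
  have hkey : ∀ s : ℕ, none ∈ C (s + 1) → y (s + 1) = - l' (x0 (s + 1)) := by
    intro s h0
    have hg := grad_zero_of_min l l' hgrad (y s) (∑ k, A k (x (s + 1) k)) ρ (x0 (s + 1))
      ((hx0upd s).1 h0)
    have hyd := (hyupd s).1 h0
    rw [hyd]
    have := hg
    rw [add_assoc] at this
    have h2 := eq_neg_of_add_eq_zero_right this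
    rw [← h2]
  have hinv : ∀ s : ℕ, 1 ≤ s → y s = - l' (x0 s) := by
    intro s hs
    induction s, hs using Nat.le_induction with
    | base => exact hkey 0 (by rw [hC1]; exact Finset.mem_univ _)
    | succ n hn ih =>
      by_cases h0 : none ∈ C (n + 1)
      · exact hkey n h0
      · rw [(hyupd n).2 h0, (hx0upd n).2 h0]; exact ih
  -- Part (a): change in y
  have parta : augLs g l ρ A (x (t + 1)) (x0 (t + 1)) (y (t + 1))
      - augLs g l ρ A (x (t + 1)) (x0 (t + 1)) (y t)
      ≤ Lc ^ 2 / ρ * ‖x0 (t + 1) - x0 t‖ ^ 2 := by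
    by_cases h0 : none ∈ C (t + 1)
    · have hyd := (hyupd t).1 h0
      set S := ∑ k, A k (x (t + 1) k) with hS
      set r := x0 (t + 1) - S with hr
      have hLHS : augLs g l ρ A (x (t + 1)) (x0 (t + 1)) (y (t + 1))
          - augLs g l ρ A (x (t + 1)) (x0 (t + 1)) (y t) = ⟪r, y (t + 1) - y t⟫ := by
        simp only [augLs, ← hS, ← hr, inner_sub_right]
        ring
      have h5 : y (t + 1) - y t = ρ • r := by rw [hyd]; abel
      have h6 : ‖y (t + 1) - y t‖ ≤ Lc * ‖x0 (t + 1) - x0 t‖ := by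
        rw [hinv (t + 1) (by omega), hinv t ht, neg_sub_neg]
        calc ‖l' (x0 t) - l' (x0 (t + 1))‖ ≤ Lc * ‖x0 t - x0 (t + 1)‖ := hLip _ _
          _ = Lc * ‖x0 (t + 1) - x0 t‖ := by rw [norm_sub_rev]
      rw [hLHS, h5, real_inner_smul_right, real_inner_self_eq_norm_sq]
      have h7 : ρ * ‖r‖ = ‖y (t + 1) - y t‖ := by
        rw [h5, norm_smul, Real.norm_eq_abs, abs_of_pos hρ]
      have h8 : ρ * ‖r‖ ≤ Lc * ‖x0 (t + 1) - x0 t‖ := h7 ▸ h6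
      rw [div_mul_eq_mul_div, le_div_iff₀ hρ]
      have h9 : (ρ * ‖r‖) ^ 2 ≤ (Lc * ‖x0 (t + 1) - x0 t‖) ^ 2 :=
        pow_le_pow_left₀ (by positivity) h8 2
      nlinarith [h9]
    · rw [(hyupd t).2 h0, sub_self]
      positivity
  -- Part (b): change in x0
  have partb : augLs g l ρ A (x (t + 1)) (x0 (t + 1)) (y t)
      - augLs g l ρ A (x (t + 1)) (x0 t) (y t)
      ≤ -(γρ / 2) * ‖x0 (t + 1) - x0 t‖ ^ 2 := by
    by_cases h0 : none ∈ C (t + 1)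
    · set S := ∑ k, A k (x (t + 1) k) with hS
      set h := fun z : EuclideanSpace ℝ (Fin M) => l z + ⟪y t, z⟫ + ρ / 2 * ‖z - S‖ ^ 2
        with hh
      have hmin : ∀ z ∈ (Set.univ : Set (EuclideanSpace ℝ (Fin M))),
          h (x0 (t + 1)) ≤ h z := fun z _ => (hx0upd t).1 h0 z
      have hsc : StrongConvexOn Set.univ γρ h := by
        have hsc0 := strongConvexOn_add_affine hstrong0
          (innerSL ℝ (y t) - ρ • innerSL ℝ S) (ρ / 2 * ‖S‖ ^ 2)
        have heq : (fun z : EuclideanSpace ℝ (Fin M) =>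
            (l z + ρ / 2 * ‖z‖ ^ 2) + (innerSL ℝ (y t) - ρ • innerSL ℝ S) z
              + ρ / 2 * ‖S‖ ^ 2) = h := by
          funext z
          simp only [hh, ContinuousLinearMap.sub_apply, ContinuousLinearMap.coe_smul',
            Pi.smul_apply, innerSL_apply_apply, smul_eq_mul]
          rw [norm_sub_sq_real, real_inner_comm, real_inner_comm S z]
          ring
        rw [heq] at hsc0
        exact hsc0
      have hkey2 := strongConvexOn_min hsc (Set.mem_univ (x0 (t + 1))) hmin
        (Set.mem_univ (x0 t))
      have hexp : ∀ z : EuclideanSpace ℝ (Fin M),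
          augLs g l ρ A (x (t + 1)) z (y t)
            = h z + (∑ k, g k (x (t + 1) k)) - ⟪S, y t⟫ := by
        intro z
        simp only [augLs, hh, ← hS, inner_sub_left]
        rw [real_inner_comm z (y t)]
        ring
      rw [hexp, hexp]
      have hnrm : ‖x0 t - x0 (t + 1)‖ = ‖x0 (t + 1) - x0 t‖ := norm_sub_rev _ _
      rw [hnrm] at hkey2
      linarith [hkey2]
    · rw [(hx0upd t).2 h0, sub_self, sub_self]
      simp
  -- Part (c): change in the x_k blocks
  have partc : augLs g l ρ A (x (t + 1)) (x0 t) (y t)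
      - augLs g l ρ A (x t) (x0 t) (y t)
      ≤ ∑ k ∈ Finset.univ.filter (fun k : Fin K => some k ∈ C (t + 1)),
          -(γk k / 2) * ‖x (t + 1) k - x t k‖ ^ 2 := by
    set w : ℕ → ∀ k : Fin K, EuclideanSpace ℝ (Fin (Nv k)) :=
      fun n k => if (k : ℕ) < n then x (t + 1) k else x t k with hw
    set F : ℕ → ℝ := fun n => augLs g l ρ A (w n) (x0 t) (y t) with hF
    have hw0 : w 0 = x t := funext fun k => if_neg (Nat.not_lt_zero _)
    have hwK : w K = x (t + 1) := funext fun k => if_pos k.isLt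
    have step : ∀ j : Fin K, F ((j : ℕ) + 1) - F (j : ℕ)
        ≤ if some j ∈ C (t + 1) then -(γk j / 2) * ‖x (t + 1) j - x t j‖ ^ 2 else 0 := by
      intro j
      set n := (j : ℕ) with hn
      have hwlt : ∀ m : ℕ, ∀ i : Fin K, i < j → ((i : ℕ) < n ∨ m = n + 1) → (n ≤ m) →
          w m i = x (t + 1) i := by
        intro m i hij _ hm
        have : (i : ℕ) < m := lt_of_lt_of_le hij hm
        simp only [hw]
        exact if_pos this
      have hwj1 : w (n + 1) j = x (t + 1) j := if_pos (Nat.lt_succ_self n)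
      have hwj0 : w n j = x t j := if_neg (lt_irrefl n)
      set s1 := ∑ i ∈ Finset.univ.filter (fun i => i < j), A i (x (t + 1) i) with hs1
      set s2 := ∑ i ∈ Finset.univ.filter (fun i => j < i), A i (x t i) with hs2
      set c := x0 t - s1 - s2 with hc
      have hSn : ∑ i, A i (w n i) = s1 + A j (x t j) + s2 := by
        rw [fin_sum_split j (fun i => A i (w n i))]
        congr 1
        · congr 1
          · apply Finset.sum_congr rfl
            intro i hi
            have hij : i < j := (Finset.mem_filter.mp hi).2
            congr 1
            exact hwlt n i hij (Or.inl hij) le_rfl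
          · rw [hwj0]
        · apply Finset.sum_congr rfl
          intro i hi
          have hij : j < i := (Finset.mem_filter.mp hi).2
          congr 1
          simp only [hw]
          exact if_neg (by omega)
      have hSn1 : ∑ i, A i (w (n + 1) i) = s1 + A j (x (t + 1) j) + s2 := by
        rw [fin_sum_split j (fun i => A i (w (n + 1) i))]
        congr 1
        · congr 1
          · apply Finset.sum_congr rfl
            intro i hi
            have hij : i < j := (Finset.mem_filter.mp hi).2
            congr 1
            exact hwlt (n + 1) i hij (Or.inr rfl) (Nat.le_succ n)
          · rw [hwj1]
        · apply Finset.sum_congr rfl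
          intro i hi
          have hij : j < i := (Finset.mem_filter.mp hi).2
          congr 1
          simp only [hw]
          exact if_neg (by omega)
      have hgsum : (∑ i, g i (w (n + 1) i)) - (∑ i, g i (w n i))
          = g j (x (t + 1) j) - g j (x t j) := by
        rw [fin_sum_split j (fun i => g i (w (n + 1) i)),
          fin_sum_split j (fun i => g i (w n i)), hwj0, hwj1]
        have e1 : ∀ i ∈ Finset.univ.filter (fun i => i < j),
            g i (w (n + 1) i) = g i (w n i) := by
          intro i hi
          have hij : i < j := (Finset.mem_filter.mp hi).2
          rw [hwlt (n + 1) i hij (Or.inr rfl) (Nat.le_succ n), hwlt n i hij (Or.inl hij) le_rfl]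
        have e2 : ∀ i ∈ Finset.univ.filter (fun i => j < i),
            g i (w (n + 1) i) = g i (w n i) := by
          intro i hi
          have hij : j < i := (Finset.mem_filter.mp hi).2
          simp only [hw]
          rw [if_neg (by omega), if_neg (by omega)]
        rw [Finset.sum_congr rfl e1, Finset.sum_congr rfl e2]
        ring
      have hc1 : x0 t - ∑ i, A i (w (n + 1) i) = c - A j (x (t + 1) j) := by
        rw [hSn1, hc]; abel
      have hc0 : x0 t - ∑ i, A i (w n i) = c - A j (x t j) := by
        rw [hSn, hc]; abel
      set f : EuclideanSpace ℝ (Fin (Nv j)) → ℝ :=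
        fun z => g j z - ⟪y t, A j z⟫ + ρ / 2 * ‖c - A j z‖ ^ 2 with hf2
      have hdiff : F (n + 1) - F n = f (x (t + 1) j) - f (x t j) := by
        simp only [hF, augLs, hc1, hc0, hf2]
        have e1 : ⟪c - A j (x (t + 1) j), y t⟫
            = ⟪c, y t⟫ - ⟪y t, A j (x (t + 1) j)⟫ := by
          rw [inner_sub_left, real_inner_comm (A j (x (t + 1) j))]
        have e2 : ⟪c - A j (x t j), y t⟫ = ⟪c, y t⟫ - ⟪y t, A j (x t j)⟫ := by
          rw [inner_sub_left, real_inner_comm (A j (x t j))]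
        rw [e1, e2]
        linarith [hgsum]
      by_cases hkC : some j ∈ C (t + 1)
      · rw [if_pos hkC, hdiff]
        obtain ⟨hmemj, hminj⟩ := (hxupd t j).1 hkC
        have hminf : ∀ z ∈ X j, f (x (t + 1) j) ≤ f z := by
          intro z hz
          have := hminj z hz
          rw [hf2]
          simp only [hc]
          exact this
        have hscf : StrongConvexOn (X j) (γk j) f := by
          have hsc0 := strongConvexOn_add_affine (hstrongk j)
            (-((innerSL ℝ (y t + ρ • c)).comp (A j))) (ρ / 2 * ‖c‖ ^ 2)
          have heq : (fun z : EuclideanSpace ℝ (Fin (Nv j)) =>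
              (g j z + ρ / 2 * ‖A j z‖ ^ 2)
                + (-((innerSL ℝ (y t + ρ • c)).comp (A j))) z + ρ / 2 * ‖c‖ ^ 2) = f := by
            funext z
            simp only [hf2, ContinuousLinearMap.neg_apply, ContinuousLinearMap.comp_apply,
              innerSL_apply_apply, inner_add_left, real_inner_smul_left]
            rw [norm_sub_sq_real c (A j z)]
            ring
          rw [heq] at hsc0
          exact hsc0
        have hkey3 := strongConvexOn_min hscf hmemj hminf (hmemX t ht j)
        have hnrm : ‖x t j - x (t + 1) j‖ = ‖x (t + 1) j - x t j‖ := norm_sub_rev _ _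
        rw [hnrm] at hkey3
        linarith [hkey3]
      · rw [if_neg hkC, hdiff, (hxupd t j).2 hkC, sub_self]
    calc augLs g l ρ A (x (t + 1)) (x0 t) (y t) - augLs g l ρ A (x t) (x0 t) (y t)
        = F K - F 0 := by rw [hF]; simp only; rw [hw0, hwK]
      _ = ∑ n ∈ Finset.range K, (F (n + 1) - F n) := (Finset.sum_range_sub F K).symm
      _ = ∑ j : Fin K, (F ((j : ℕ) + 1) - F (j : ℕ)) :=
          (Fin.sum_univ_eq_sum_range (fun n => F (n + 1) - F n) K).symm
      _ ≤ ∑ j : Fin K, if some j ∈ C (t + 1)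
            then -(γk j / 2) * ‖x (t + 1) j - x t j‖ ^ 2 else 0 :=
          Finset.sum_le_sum fun j _ => step j
      _ = ∑ k ∈ Finset.univ.filter (fun k : Fin K => some k ∈ C (t + 1)),
            -(γk k / 2) * ‖x (t + 1) k - x t k‖ ^ 2 := (Finset.sum_filter _ _).symm
  linarith [parta, partb, partc]
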